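/- arXiv:0802.3372 — 2 statements merged into one kernel-verified Lean document; each statement's English description precedes it below -/
import Mathlib

section
/- For the (p-1)×(p-1) tridiagonal matrix M_p with first diagonal entry -p-2, remaining diagonal entries -2, and off-diagonal entries 1, the cokernel of the induced map ℤ^(p-1) → ℤ^(p-1) is a cyclic group of order p². -/
/-!
If a homomorphism `ψ` out of `ℤ^(p-1)` kills the range of `M_p`, the columns of `M_p` say that the
images `x_k = ψ e_k` satisfy `x₁ = (p + 2) x₀` and `x_{k+2} - 2 x_{k+1} + x_k = 0`, where
`x_{p-1} = 0` because there is no basis vector `e_{p-1}`. So `x_k = (1 + (p + 1) k) x₀`, and at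
`k = p - 1` this reads `p² x₀ = 0`. For the quotient map this says that the cokernel is generated
by the class of `e₀` and killed by `p²`. Conversely `v ↦ Σ (1 + (p + 1) k) v_k mod p²` satisfies
the recurrence, so it induces a surjection of the cokernel onto `ℤ/p²`, which must be an
isomorphism.
-/

/-- The intersection matrix of the rational blow-down configuration `C_p`:
the `(p-1) × (p-1)` tridiagonal matrix with diagonal `(-p-2, -2, …, -2)`
and off-diagonal entries `1`. -/
def Mp (p : ℕ) : Matrix (Fin (p - 1)) (Fin (p - 1)) ℤ := fun i j =>
  if i = j then (if i.val = 0 then -(p + 2) else -2)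
  else if i.val + 1 = j.val ∨ j.val + 1 = i.val then 1 else 0

open Matrix

theorem eq_add_zsmul_of_second_difference {G : Type*} [AddCommGroup G] {n : ℕ} {x : ℕ → G}
    (h : ∀ j, j + 2 ≤ n → x (j + 2) + x j = 2 • x (j + 1)) :
    ∀ k ≤ n, x k = x 0 + (k : ℤ) • (x 1 - x 0) := by
  intro k
  induction k using Nat.twoStepInduction with
  | zero => simp
  | one => simp
  | more k ih₀ ih₁ =>
    intro hk
    rw [eq_sub_of_add_eq (h k hk), ih₀ (by omega), ih₁ (by omega)]
    push_cast
    module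

/-- Indexed by `k : ℕ` and `0` for `k ≥ n`, so that the last column of `Mp` has the same shape
as the other columns. -/
def natSingle (n k : ℕ) : Fin n → ℤ := fun i => if (i : ℕ) = k then 1 else 0

theorem natSingle_of_le {n k : ℕ} (h : n ≤ k) : natSingle n k = 0 := by
  ext i
  simp only [natSingle, Pi.zero_apply, ite_eq_right_iff]
  omega

theorem natSingle_val {n : ℕ} (j : Fin n) : natSingle n j = Pi.single j 1 := by
  ext i
  simp [natSingle, Pi.single_apply, Fin.ext_iff]

theorem dotProduct_natSingle {n : ℕ} (v : Fin n → ℤ) (k : ℕ) :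
    v ⬝ᵥ natSingle n k = if h : k < n then v ⟨k, h⟩ else 0 := by
  split_ifs with h
  · simpa using natSingle_val ⟨k, h⟩ ▸ dotProduct_single_one v ⟨k, h⟩
  · rw [natSingle_of_le (not_lt.mp h), dotProduct_zero]

theorem mulVec_natSingle_apply {m : Type*} {n : ℕ} (M : Matrix m (Fin n) ℤ) (k : ℕ) (i : m) :
    (M *ᵥ natSingle n k) i = if h : k < n then M i ⟨k, h⟩ else 0 :=
  dotProduct_natSingle _ k

theorem map_eq_sum_smul_natSingle {G : Type*} [AddCommGroup G] {n : ℕ} (ψ : (Fin n → ℤ) →+ G)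
    (v : Fin n → ℤ) : ψ v = ∑ i : Fin n, v i • ψ (natSingle n i) := by
  conv_lhs => rw [pi_eq_sum_univ' v]
  simp only [map_sum, map_zsmul, natSingle_val]

namespace Mp

theorem mulVec_natSingle_zero (p : ℕ) :
    Mp p *ᵥ natSingle (p - 1) 0 = natSingle (p - 1) 1 - ((p : ℤ) + 2) • natSingle (p - 1) 0 := by
  ext i
  rw [mulVec_natSingle_apply]
  simp only [Mp, natSingle, Pi.sub_apply, Pi.smul_apply, Fin.ext_iff, smul_eq_mul,
    Nat.add_one_ne_zero, false_or]
  split_ifs <;> omega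

theorem mulVec_natSingle_succ {p j : ℕ} (hj : j + 1 < p - 1) :
    Mp p *ᵥ natSingle (p - 1) (j + 1) =
      natSingle (p - 1) (j + 2) - (2 : ℤ) • natSingle (p - 1) (j + 1) + natSingle (p - 1) j := by
  ext i
  rw [mulVec_natSingle_apply]
  simp only [Mp, natSingle, Pi.sub_apply, Pi.add_apply, Pi.smul_apply, Fin.ext_iff, smul_eq_mul]
  split_ifs <;> omega

def weight (p k : ℕ) : ℤ := 1 + (p + 1) * k

theorem weight_sub_one {p : ℕ} (hp : 0 < p) : weight p (p - 1) = p ^ 2 := by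
  rw [weight, Nat.cast_sub hp]
  ring

section

variable {G : Type*} [AddCommGroup G] {p : ℕ} (ψ : (Fin (p - 1) → ℤ) →+ G)

theorem map_mulVec_eq_zero_iff :
    (∀ u, ψ (Mp p *ᵥ u) = 0) ↔
      ∀ k ≤ p - 1, ψ (natSingle (p - 1) k) = weight p k • ψ (natSingle (p - 1) 0) := by
  constructor
  · intro hψ k hk
    set x : ℕ → G := fun k => ψ (natSingle (p - 1) k)
    have h₁ : x 1 = ((p : ℤ) + 2) • x 0 := by
      have := hψ (natSingle (p - 1) 0)
      rwa [mulVec_natSingle_zero, map_sub, map_zsmul, sub_eq_zero] at this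
    have hrec : ∀ j, j + 2 ≤ p - 1 → x (j + 2) + x j = 2 • x (j + 1) := by
      intro j hj
      have := hψ (natSingle (p - 1) (j + 1))
      rw [mulVec_natSingle_succ (by omega), map_add, map_sub, map_zsmul] at this
      rw [← sub_eq_zero, ← this]
      module
    change x k = _
    rw [eq_add_zsmul_of_second_difference hrec k hk, h₁, weight]
    module
  · intro hx u
    refine (map_eq_sum_smul_natSingle (ψ.comp (Mp p).mulVecLin.toAddMonoidHom) u).trans
      (Finset.sum_eq_zero fun j _ => ?_)
    obtain ⟨_ | j, hj⟩ := j
    · simp only [AddMonoidHom.comp_apply, LinearMap.toAddMonoidHom_coe, mulVecLin_apply,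
        mulVec_natSingle_zero, map_sub, map_zsmul, hx 1 (by omega), weight]
      push_cast
      module
    · simp only [AddMonoidHom.comp_apply, LinearMap.toAddMonoidHom_coe, mulVecLin_apply,
        mulVec_natSingle_succ hj, map_add, map_sub, map_zsmul, hx j (by omega),
        hx (j + 1) (by omega), hx (j + 2) (by omega), weight]
      push_cast
      module

theorem map_eq_weight_dotProduct_smul (hψ : ∀ u, ψ (Mp p *ᵥ u) = 0) (v : Fin (p - 1) → ℤ) :
    ψ v = ((fun i : Fin (p - 1) => weight p i) ⬝ᵥ v) • ψ (natSingle (p - 1) 0) := by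
  rw [map_eq_sum_smul_natSingle ψ v, dotProduct, Finset.sum_smul]
  refine Finset.sum_congr rfl fun i _ => ?_
  rw [(map_mulVec_eq_zero_iff ψ).1 hψ i (by omega), smul_smul, mul_comm]

theorem sq_smul_map_natSingle_zero (hp : 0 < p) (hψ : ∀ u, ψ (Mp p *ᵥ u) = 0) :
    ((p : ℤ) ^ 2) • ψ (natSingle (p - 1) 0) = 0 := by
  have := (map_mulVec_eq_zero_iff ψ).1 hψ (p - 1) le_rfl
  rwa [natSingle_of_le le_rfl, map_zero, weight_sub_one hp, eq_comm] at this

end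

def weightHom (p : ℕ) : (Fin (p - 1) → ℤ) →+ ZMod (p ^ 2) :=
  AddMonoidHom.mk' (fun v => (((fun i : Fin (p - 1) => weight p i) ⬝ᵥ v : ℤ) : ZMod (p ^ 2)))
    fun v w => by rw [dotProduct_add, Int.cast_add]

theorem weightHom_natSingle {p k : ℕ} (hp : 0 < p) (hk : k ≤ p - 1) :
    weightHom p (natSingle (p - 1) k) = weight p k := by
  simp only [weightHom, AddMonoidHom.mk'_apply, dotProduct_natSingle]
  split_ifs with h
  · rfl
  · rw [show k = p - 1 by omega, weight_sub_one hp, Int.cast_zero]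
    exact_mod_cast (ZMod.natCast_self (p ^ 2)).symm

theorem range_eq_ker_weightHom {p : ℕ} (hp : 0 < p) :
    (LinearMap.range (toLin' (Mp p))).toAddSubgroup = (weightHom p).ker := by
  set R := (LinearMap.range (toLin' (Mp p))).toAddSubgroup
  have hπ : ∀ u, QuotientAddGroup.mk' R (Mp p *ᵥ u) = 0 := fun u =>
    (QuotientAddGroup.eq_zero_iff _).2 ⟨u, rfl⟩
  refine le_antisymm ?_ fun v hv => ?_
  · rintro _ ⟨u, rfl⟩
    refine (map_mulVec_eq_zero_iff (weightHom p)).2 (fun k hk => ?_) u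
    simp [weightHom_natSingle hp hk, weightHom_natSingle hp (Nat.zero_le _), weight]
  · obtain ⟨c, hc⟩ := (ZMod.intCast_zmod_eq_zero_iff_dvd _ (p ^ 2)).1 hv
    rw [← QuotientAddGroup.eq_zero_iff, ← QuotientAddGroup.mk'_apply,
      map_eq_weight_dotProduct_smul _ hπ, hc]
    push_cast
    rw [mul_comm, mul_smul, sq_smul_map_natSingle_zero _ hp hπ, smul_zero]

theorem weightHom_surjective {p : ℕ} (hp : 2 ≤ p) : Function.Surjective (weightHom p) := by
  intro z
  obtain ⟨m, rfl⟩ := ZMod.intCast_surjective z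
  refine ⟨m • natSingle (p - 1) 0, ?_⟩
  rw [map_zsmul, weightHom_natSingle (by omega) (Nat.zero_le _)]
  simp [weight]

end Mp

/-- The cokernel of `M_p : ℤ^(p-1) → ℤ^(p-1)` is cyclic of order `p²`. -/
theorem coker_Mp (p : ℕ) (hp : 2 ≤ p) :
    Nonempty (((Fin (p - 1) → ℤ) ⧸
      (LinearMap.range (Matrix.toLin' (Mp p))).toAddSubgroup) ≃+ ZMod (p ^ 2)) :=
  ⟨(QuotientAddGroup.quotientAddEquivOfEq (Mp.range_eq_ker_weightHom (by omega))).trans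
    (QuotientAddGroup.quotientKerEquivOfSurjective _ (Mp.weightHom_surjective hp))⟩
end

section
/- For p ≥ 2 the intersection matrix M_p of C_p is negative definite. -/
/-- The real intersection matrix of `C_p`: the `(p-1) × (p-1)` tridiagonal
matrix with diagonal `(-(p+2), -2, …, -2)` and off-diagonal entries `1`. -/
def MpR (p : ℕ) : Matrix (Fin (p - 1)) (Fin (p - 1)) ℝ := fun i j =>
  if i = j then (if i.val = 0 then -(p + 2) else -2)
  else if i.val + 1 = j.val ∨ j.val + 1 = i.val then 1 else 0

/-!
`-M_p` is the Laplacian of the path graph on `p - 1` vertices plus the diagonal weight `p + 1` at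
the first vertex and `1` at the last. A Laplacian of a connected graph is positive semidefinite and
its form vanishes only on constant vectors; a nonnegative diagonal that is positive somewhere
kills the constants.
-/

open Matrix Finset

namespace SimpleGraph

theorem posDef_lapMatrix_add_diagonal {V : Type*} [Fintype V] [DecidableEq V]
    (G : SimpleGraph V) [DecidableRel G.Adj] (hG : G.Preconnected) {w : V → ℝ} (hw : 0 ≤ w)
    {v : V} (hv : 0 < w v) : (G.lapMatrix ℝ + diagonal w).PosDef := by
  refine .of_dotProduct_mulVec_pos ((isHermitian_lapMatrix ℝ G).add
    (isHermitian_diagonal_of_self_adjoint _ (star_trivial w))) fun x hx => ?_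
  have hL : 0 ≤ x ⬝ᵥ (G.lapMatrix ℝ *ᵥ x) := by
    simpa using (posSemidef_lapMatrix ℝ G).dotProduct_mulVec_nonneg x
  have hD : x ⬝ᵥ (diagonal w *ᵥ x) = ∑ i, w i * x i ^ 2 := by
    simp only [dotProduct, mulVec_diagonal]
    exact sum_congr rfl fun i _ => by ring
  have hD_nonneg : ∀ i ∈ univ, 0 ≤ w i * x i ^ 2 := fun i _ => mul_nonneg (hw i) (sq_nonneg _)
  rw [star_trivial, add_mulVec, dotProduct_add, hD]
  by_contra! h
  have hD0 : ∑ i, w i * x i ^ 2 = 0 := by linarith [sum_nonneg hD_nonneg]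
  have hL0 : x ⬝ᵥ (G.lapMatrix ℝ *ᵥ x) = 0 := by linarith
  have hxv : x v = 0 := by
    simpa [hv.ne'] using (sum_eq_zero_iff_of_nonneg hD_nonneg).1 hD0 v (mem_univ v)
  rw [← toLinearMap₂'_apply', lapMatrix_toLinearMap₂'_apply'_eq_zero_iff_forall_reachable] at hL0
  exact hx (funext fun i => (hL0 i v (hG i v)).trans hxv)

instance (n : ℕ) : DecidableRel (pathGraph n).Adj := fun _ _ => decidable_of_iff' _ pathGraph_adj

theorem degree_pathGraph {n : ℕ} (i : Fin n) :
    (pathGraph n).degree i = (if i.val = 0 then 0 else 1) + (if i.val + 1 = n then 0 else 1) := by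
  have hsplit : ∀ k : ℕ, (if i.val + 1 = k ∨ k + 1 = i.val then 1 else 0) =
      (if i.val = 0 then 0 else if i.val - 1 = k then 1 else 0) +
        (if i.val + 1 = k then 1 else 0) := by
    intro k
    split_ifs <;> omega
  rw [← Nat.cast_id ((pathGraph n).degree i), degree_eq_sum_if_adj]
  simp only [pathGraph_adj]
  rw [Fin.sum_univ_eq_sum_range (fun k => if i.val + 1 = k ∨ k + 1 = i.val then 1 else 0),
    sum_congr rfl fun k _ => hsplit k, sum_add_distrib]
  simp only [sum_ite_irrel, sum_const_zero, sum_ite_eq, mem_range]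
  have hi := i.isLt
  split_ifs <;> omega

end SimpleGraph

open SimpleGraph

theorem MpR_eq_neg_lapMatrix_add_diagonal (p : ℕ) :
    MpR p = -((pathGraph (p - 1)).lapMatrix ℝ + diagonal fun i =>
      (if i.val = 0 then (p : ℝ) + 1 else 0) + (if i.val + 1 = p - 1 then 1 else 0)) := by
  ext i j
  by_cases hij : i = j
  · subst hij
    simp only [MpR, lapMatrix, degMatrix, degree_pathGraph, ↓reduceIte, Matrix.neg_apply,
      Matrix.add_apply, Matrix.sub_apply, diagonal_apply_eq, adjMatrix_apply, SimpleGraph.irrefl,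
      Nat.cast_add, Nat.cast_ite, Nat.cast_zero, Nat.cast_one]
    split_ifs <;> ring
  · simp [MpR, lapMatrix, degMatrix, hij, pathGraph_adj]

theorem posDef_neg_MpR (p : ℕ) (hp : 2 ≤ p) : (-MpR p).PosDef := by
  rw [MpR_eq_neg_lapMatrix_add_diagonal, neg_neg]
  exact posDef_lapMatrix_add_diagonal _ (pathGraph_preconnected _) (fun i => by positivity)
    (v := ⟨0, by omega⟩) (by simp only [↓reduceIte, zero_add]; positivity)

/-- For `p ≥ 2`, the intersection form of `C_p` is negative definite. -/
theorem Mp_negDef (p : ℕ) (hp : 2 ≤ p) :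
    ∀ x : Fin (p - 1) → ℝ, x ≠ 0 → dotProduct x ((MpR p).mulVec x) < 0 := by
  intro x hx
  simpa [neg_mulVec] using (posDef_neg_MpR p hp).dotProduct_mulVec_pos hx
end
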